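/- arXiv:math/9907031 — 3 statements merged into one kernel-verified Lean document; each statement's English description precedes it below -/
import Mathlib

section
/- Let (g, d, [·,·]) be a differential graded Lie algebra over a field k of characteristic zero, η : g → g a linear map of degree −1, and μₙ the maps of Theorem 3.1 (μ₁ = d, μ₂ = (dη+ηd)[·,·], μₙ defined recursively via η). Define the Kuranishi map by its components K₁(v₁) = v₁, K₂(v₁,v₂) = η[v₁,v₂], and Kₙ = 0 for n ≥ 3. Then for every n ≥ 1 and all homogeneous v₁,…,vₙ ∈ g the L∞-morphism equations into the abelian differential graded Lie algebra (g, d, 0) hold: d Kₙ(v₁,…,vₙ) = Σ_{k+l=n+1, k,l≥1} Σ_{σ∈Sh(k,n)} (−1)^{σ+k(l−1)} e(σ) K_l(μₖ(v_{σ(1)},…,v_{σ(k)}), v_{σ(k+1)},…,v_{σ(n)}). In particular, since K₁ is the identity, the Kuranishi map is an L∞-isomorphism from (g, μ_*) to (g, d, 0). -/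
open Finset
open scoped TensorProduct

noncomputable section

/-- The Koszul sign `e(σ; v₁,…,vₙ)` of a permutation `σ` with respect to the (integer)
degrees `deg i` of homogeneous elements, defined by
`v_{σ(1)} ∧ … ∧ v_{σ(n)} = (-1)^σ e(σ) v₁ ∧ … ∧ vₙ`. -/
def koszulSign (k : Type*) [Field k] {n : ℕ} (deg : Fin n → ℤ) (σ : Equiv.Perm (Fin n)) : k :=
  ∏ p ∈ Finset.univ.filter (fun p : Fin n × Fin n => p.1 < p.2 ∧ σ p.2 < σ p.1),
    (-1 : k) ^ (deg (σ p.1) * deg (σ p.2))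

/-- The sign `(-1)^σ` of a permutation, as an element of the field `k`. -/
def permSign (k : Type*) [Field k] {n : ℕ} (σ : Equiv.Perm (Fin n)) : k :=
  ((Equiv.Perm.sign σ : ℤ) : k)

/-- `Sh(p,n)`: the permutations of `{0,…,n-1}` that are strictly increasing on the first `p`
positions and on the remaining `n - p` positions. -/
def shuffles (p n : ℕ) : Finset (Equiv.Perm (Fin n)) :=
  Finset.univ.filter fun σ =>
    (∀ a b : Fin n, (a : ℕ) < (b : ℕ) → (b : ℕ) < p → σ a < σ b) ∧
    (∀ a b : Fin n, (a : ℕ) < (b : ℕ) → p ≤ (a : ℕ) → σ a < σ b)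

/-- A differential graded Lie algebra over `k` on the carrier `V`, presented by its
(internal) ℤ-grading, differential `d` of degree `+1` and bracket of degree `0`,
satisfying graded antisymmetry, the graded Jacobi identity and the graded Leibniz rule. -/
structure GradedDGLA (k V : Type*) [Field k] [AddCommGroup V] [Module k V] where
  grade : ℤ → Submodule k V
  internal : DirectSum.IsInternal grade
  d : V →ₗ[k] V
  bracket : V →ₗ[k] V →ₗ[k] V
  d_grade : ∀ (i : ℤ) (v : V), v ∈ grade i → d v ∈ grade (i + 1)
  bracket_grade : ∀ (i j : ℤ) (x y : V), x ∈ grade i → y ∈ grade j →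
    bracket x y ∈ grade (i + j)
  d_sq : ∀ v : V, d (d v) = 0
  antisymm : ∀ (i j : ℤ) (x y : V), x ∈ grade i → y ∈ grade j →
    bracket x y = -((-1 : k) ^ (i * j) • bracket y x)
  jacobi : ∀ (i j l : ℤ) (x y z : V), x ∈ grade i → y ∈ grade j → z ∈ grade l →
    (-1 : k) ^ (i * l) • bracket (bracket x y) z
      + (-1 : k) ^ (j * i) • bracket (bracket y z) x
      + (-1 : k) ^ (l * j) • bracket (bracket z x) y = 0
  leibniz : ∀ (i : ℤ) (x y : V), x ∈ grade i →
    d (bracket x y) = bracket (d x) y + (-1 : k) ^ i • bracket x (d y)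

/-- The `L∞`-operations `μₙ` of Theorem 3.1, built from a differential `d`, a bracket `br`
and a degree `-1` operator `η`:  `μ₁ = d`, `μ₂ = (dη + ηd)[·,·]`, and for `n ≥ 3`
`μₙ(v₁,…,vₙ) = (-1)ⁿ ∑_{σ ∈ Sh(n-1,n)} (-1)^σ e(σ) η[μ_{n-1}(v_{σ(1)},…,v_{σ(n-1)}), v_{σ(n)}]`.
The arguments are homogeneous of degrees recorded in `deg`. -/
def muRec {k : Type*} [Field k] {W : Type*} [AddCommGroup W] [Module k W]
    (d : W →ₗ[k] W) (br : W →ₗ[k] W →ₗ[k] W) (η : W →ₗ[k] W) :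
    (n : ℕ) → (Fin n → ℤ) → (Fin n → W) → W
  | 0, _, _ => 0
  | 1, _, v => d (v 0)
  | 2, _, v => d (η (br (v 0) (v 1))) + η (d (br (v 0) (v 1)))
  | (n + 3), deg, v =>
      (-1 : k) ^ (n + 3) •
        ∑ σ ∈ shuffles (n + 2) (n + 3),
          (permSign k σ * koszulSign k deg σ) •
            η (br
                (muRec d br η (n + 2) (fun i => deg (σ i.castSucc))
                  (fun i => v (σ i.castSucc)))
                (v (σ (Fin.last (n + 2)))))

/-- The general right-hand side `∑_{k+l=n+1} ∑_{σ ∈ Sh(k,n)} (-1)^{σ + k(l-1)} e(σ)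
F_l(μ_k(v_{σ(1)},…,v_{σ(k)}), v_{σ(k+1)},…,v_{σ(n)})` appearing both in the higher Jacobi
identities (with `F = μ`) and in the `L∞`-morphism equations into an abelian dg Lie algebra. -/
def linfRHS (k : Type*) [Field k] {W : Type*} [AddCommGroup W] [Module k W]
    (μ F : (m : ℕ) → (Fin m → ℤ) → (Fin m → W) → W)
    (n : ℕ) (deg : Fin n → ℤ) (v : Fin n → W) : W :=
  ∑ p : Fin n, ∑ σ ∈ shuffles ((p : ℕ) + 1) n,
    (permSign k σ * (-1 : k) ^ (((p : ℕ) + 1) * (n - 1 - (p : ℕ))) * koszulSign k deg σ) •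
      F (n - (p : ℕ))
        (fun i =>
          if (i : ℕ) = 0 then
            (∑ j : Fin ((p : ℕ) + 1),
              deg (σ ⟨(j : ℕ), by have := j.isLt; have := p.isLt; omega⟩)) + 1 - ((p : ℕ) : ℤ)
          else
            deg (σ ⟨(p : ℕ) + (i : ℕ), by have := i.isLt; have := p.isLt; omega⟩))
        (fun i =>
          if (i : ℕ) = 0 then
            μ ((p : ℕ) + 1)
              (fun j => deg (σ ⟨(j : ℕ), by have := j.isLt; have := p.isLt; omega⟩))
              (fun j => v (σ ⟨(j : ℕ), by have := j.isLt; have := p.isLt; omega⟩))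
          else
            v (σ ⟨(p : ℕ) + (i : ℕ), by have := i.isLt; have := p.isLt; omega⟩))

/-- The `n`-th higher Jacobi expression `Φₙ` of a family `μ` of multilinear operations. -/
def higherJacobi (k : Type*) [Field k] {W : Type*} [AddCommGroup W] [Module k W]
    (μ : (m : ℕ) → (Fin m → ℤ) → (Fin m → W) → W)
    (n : ℕ) (deg : Fin n → ℤ) (v : Fin n → W) : W :=
  linfRHS k μ μ n deg v

/-- The Kuranishi map: `K₁ = id`, `K₂ = η[·,·]`, `Kₙ = 0` for `n ≥ 3` (and `n = 0`). -/
def kurMap {k : Type*} [Field k] {W : Type*} [AddCommGroup W] [Module k W]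
    (br : W →ₗ[k] W →ₗ[k] W) (η : W →ₗ[k] W) :
    (n : ℕ) → (Fin n → ℤ) → (Fin n → W) → W
  | 1, _, v => v 0
  | 2, _, v => η (br (v 0) (v 1))
  | _, _, _ => 0

/-! Since `Kₗ = 0` for `l ≥ 3`, only the summands with `l ∈ {1, 2}` survive on the right-hand
side. For `n ≥ 3` these are `μₙ` and `(-1)ⁿ⁻¹ ∑ ±η[μₙ₋₁(…), v]`, which cancel by the very
recursion defining `μₙ`. For `n = 2` the identity reduces to
`η d[x, y] = η[dx, y] - (-1)^{|x||y|} η[dy, x]`, i.e. Leibniz plus graded antisymmetry. -/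

namespace GradedDGLA

variable {k V : Type*} [Field k] [AddCommGroup V] [Module k V] (D : GradedDGLA k V)

theorem d_bracket_eq_sub {i j : ℤ} {x y : V} (hx : x ∈ D.grade i) (hy : y ∈ D.grade j) :
    D.d (D.bracket x y) = D.bracket (D.d x) y - (-1 : k) ^ (j * i) • D.bracket (D.d y) x := by
  have hsign : (-1 : k) ^ i * (-1 : k) ^ (i * (j + 1)) = (-1 : k) ^ (j * i) := by
    rw [← zpow_add₀ (by norm_num), show i + i * (j + 1) = j * i + 2 * i by ring,
      zpow_add₀ (by norm_num), (even_two_mul i).neg_one_zpow, mul_one]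
  rw [D.leibniz i x y hx, D.antisymm i (j + 1) x (D.d y) hx (D.d_grade j y hy), smul_neg,
    smul_smul, hsign, sub_eq_add_neg]

end GradedDGLA

theorem shuffles_self (n : ℕ) : shuffles n n = {1} := by
  ext σ
  simp only [shuffles, mem_filter, mem_univ, true_and, mem_singleton]
  constructor
  · rintro ⟨hσ, -⟩
    have hmono : StrictMono σ := fun a b hab => hσ a b hab b.isLt
    exact Equiv.ext fun a => hmono.apply_eq
  · rintro rfl
    exact ⟨fun a b hab _ => hab, fun a b hab _ => hab⟩

theorem shuffles_one_two : shuffles 1 2 = {1, Equiv.swap 0 1} := by decide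

section Signs

variable (k : Type*) [Field k]

@[simp] theorem permSign_one (n : ℕ) : permSign k (1 : Equiv.Perm (Fin n)) = 1 := by
  simp [permSign]

@[simp] theorem permSign_swap_zero_one : permSign k (Equiv.swap (0 : Fin 2) 1) = -1 := by
  simp [permSign]

@[simp] theorem koszulSign_one {n : ℕ} (deg : Fin n → ℤ) : koszulSign k deg 1 = 1 :=
  prod_eq_one fun _ hp => absurd (mem_filter.1 hp).2.2 (lt_asymm (mem_filter.1 hp).2.1)

@[simp] theorem koszulSign_swap_zero_one (deg : Fin 2 → ℤ) :
    koszulSign k deg (Equiv.swap 0 1) = (-1 : k) ^ (deg 1 * deg 0) := by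
  rw [koszulSign, show univ.filter (fun p : Fin 2 × Fin 2 =>
    p.1 < p.2 ∧ Equiv.swap 0 1 p.2 < Equiv.swap 0 1 p.1) = {(0, 1)} by decide]
  simp

end Signs

section Kuranishi

variable {k W : Type*} [Field k] [AddCommGroup W] [Module k W]
  (br : W →ₗ[k] W →ₗ[k] W) (η : W →ₗ[k] W) (μ : (m : ℕ) → (Fin m → ℤ) → (Fin m → W) → W)

theorem kurMap_of_three_le {r : ℕ} (hr : 3 ≤ r) (deg : Fin r → ℤ) (v : Fin r → W) :
    kurMap br η r deg v = 0 := by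
  obtain ⟨s, rfl⟩ := Nat.exists_eq_add_of_le' hr
  rfl

theorem kurMap_of_eq_one {r : ℕ} (hr : r = 1) (deg : Fin r → ℤ) (v : Fin r → W) :
    kurMap br η r deg v = v ⟨0, by omega⟩ := by
  subst hr
  rfl

theorem kurMap_of_eq_two {r : ℕ} (hr : r = 2) (deg : Fin r → ℤ) (v : Fin r → W) :
    kurMap br η r deg v = η (br (v ⟨0, by omega⟩) (v ⟨1, by omega⟩)) := by
  subst hr
  rfl

theorem linfRHS_kurMap_one (deg : Fin 1 → ℤ) (v : Fin 1 → W) :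
    linfRHS k μ (kurMap br η) 1 deg v = μ 1 (fun _ => deg 0) (fun _ => v 0) := by
  simp [linfRHS, shuffles_self, kurMap]

theorem linfRHS_kurMap_two (deg : Fin 2 → ℤ) (v : Fin 2 → W) :
    linfRHS k μ (kurMap br η) 2 deg v =
      μ 2 deg v - η (br (μ 1 (fun _ => deg 0) (fun _ => v 0)) (v 1))
        + (-1 : k) ^ (deg 1 * deg 0) • η (br (μ 1 (fun _ => deg 1) (fun _ => v 1)) (v 0)) := by
  simp [linfRHS, shuffles_self, shuffles_one_two, kurMap, Fin.sum_univ_two,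
    sum_pair (show (1 : Equiv.Perm (Fin 2)) ≠ Equiv.swap 0 1 by decide)]
  abel

theorem linfRHS_kurMap_add_three (m : ℕ) (deg : Fin (m + 3) → ℤ) (v : Fin (m + 3) → W) :
    linfRHS k μ (kurMap br η) (m + 3) deg v =
      μ (m + 3) deg v + (-1 : k) ^ (m + 2) • ∑ σ ∈ shuffles (m + 2) (m + 3),
        (permSign k σ * koszulSign k deg σ) •
          η (br (μ (m + 2) (fun i => deg (σ i.castSucc)) (fun i => v (σ i.castSucc)))
            (v (σ (Fin.last (m + 2))))) := by
  rw [linfRHS, Fin.sum_univ_castSucc, Fin.sum_univ_castSucc,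
    sum_eq_zero fun p _ => sum_eq_zero fun σ _ => by
      rw [kurMap_of_three_le br η (by simp; omega), smul_zero], zero_add]
  simp only [Fin.val_castSucc, Fin.val_last, shuffles_self, sum_singleton,
    kurMap_of_eq_one br η (show m + 3 - (m + 2) = 1 by omega),
    kurMap_of_eq_two br η (show m + 3 - (m + 1) = 2 by omega)]
  simp only [Nat.add_one_sub_one, Nat.reduceSubDiff, add_tsub_cancel_left, mul_one, ↓reduceIte,
    one_ne_zero, permSign_one, tsub_self, mul_zero, pow_zero, koszulSign_one, Fin.eta,
    Equiv.Perm.coe_one, id_eq, one_smul]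
  rw [add_comm, Finset.smul_sum]
  congr 1
  refine sum_congr rfl fun σ _ => ?_
  rw [smul_smul]
  congr 1
  ring

end Kuranishi

theorem statement1_general {k V : Type*} [Field k] [AddCommGroup V] [Module k V]
    (D : GradedDGLA k V) (η : V →ₗ[k] V)
    (n : ℕ) (deg : Fin n → ℤ) (v : Fin n → V)
    (hv : ∀ j, v j ∈ D.grade (deg j)) :
    D.d (kurMap D.bracket η n deg v)
      = linfRHS k (muRec D.d D.bracket η) (kurMap D.bracket η) n deg v := by
  match n with
  | 0 => simp [kurMap, linfRHS]
  | 1 => rw [linfRHS_kurMap_one]; rfl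
  | 2 =>
    rw [linfRHS_kurMap_two, kurMap, muRec, muRec, muRec, D.d_bracket_eq_sub (hv 0) (hv 1)]
    simp only [map_sub, map_smul]
    abel
  | m + 3 =>
    rw [linfRHS_kurMap_add_three, kurMap_of_three_le _ _ (by omega), map_zero, muRec, pow_succ,
      mul_neg_one, neg_smul, neg_add_cancel]

theorem statement1 {k V : Type*} [Field k] [CharZero k] [AddCommGroup V] [Module k V]
    (D : GradedDGLA k V) (η : V →ₗ[k] V)
    (hη : ∀ (i : ℤ) (v : V), v ∈ D.grade i → η v ∈ D.grade (i - 1))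
    (n : ℕ) (hn : 1 ≤ n) (deg : Fin n → ℤ) (v : Fin n → V)
    (hv : ∀ j, v j ∈ D.grade (deg j)) :
    D.d (kurMap D.bracket η n deg v)
      = linfRHS k (muRec D.d D.bracket η) (kurMap D.bracket η) n deg v :=
  statement1_general D η n deg v hv
end
end

section
/- Let (g, d, [·,·]) be a differential graded Lie algebra over a field k of characteristic zero, η : g → g a linear map of degree −1, and μₙ the maps of Theorem 3.1. Let R be a local Artin k-algebra with maximal ideal m. Then an element Γ ∈ (g⊗m)¹ satisfies the L∞ Maurer–Cartan equation Σ_{k≥1} ((−1)^{k(k+1)/2}/k!) μₖ(Γ,…,Γ) = 0 if and only if d(Γ + ½ η[Γ,Γ]) = 0. (Equivalently, the Kuranishi map Γ ↦ Γ + ½η[Γ,Γ] identifies the Maurer–Cartan set of the L∞-algebra (g⊗m, μ_*) with the Maurer–Cartan set of the abelian differential graded Lie algebra (g⊗m, d, 0).) -/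
open Finset
open scoped TensorProduct

noncomputable section

/-- The bracket on `V ⊗[k] R` induced by a bracket on `V` and the multiplication of `R`:
`[x ⊗ a, y ⊗ b] = [x,y] ⊗ (a*b)`. -/
def tensorBracket {k : Type*} [Field k] {V : Type*} [AddCommGroup V] [Module k V]
    {R : Type*} [CommRing R] [Algebra k R] (br : V →ₗ[k] V →ₗ[k] V) :
    (V ⊗[k] R) →ₗ[k] (V ⊗[k] R) →ₗ[k] (V ⊗[k] R) :=
  TensorProduct.curry
    ((TensorProduct.map (TensorProduct.lift br) (LinearMap.mul' k R)).comp
      (TensorProduct.tensorTensorTensorComm k V R V R).toLinearMap)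

/-- The homogeneous piece `(g ⊗ m)ⁱ = gⁱ ⊗ m` of `V ⊗[k] R`: the image of `p ⊗ q` in
`V ⊗[k] R`, for a submodule `p ⊆ V` (a graded piece) and a `k`-submodule `q ⊆ R`
(the maximal ideal). -/
def tensorGrade {k : Type*} [Field k] {V : Type*} [AddCommGroup V] [Module k V]
    {R : Type*} [CommRing R] [Algebra k R] (p : Submodule k V) (q : Submodule k R) :
    Submodule k (V ⊗[k] R) :=
  LinearMap.range (TensorProduct.map p.subtype q.subtype)

/-- The maximal ideal of a local `k`-algebra, viewed as a `k`-submodule. -/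
def maxIdealSub (k : Type*) [Field k] (R : Type*) [CommRing R] [Algebra k R]
    [IsLocalRing R] : Submodule k R :=
  Submodule.restrictScalars k (IsLocalRing.maximalIdeal R)

/-- The coefficient `(-1)^{n(n+1)/2} / n!` of the `L∞` Maurer–Cartan equation. -/
def mcCoeff (k : Type*) [Field k] (n : ℕ) : k :=
  (-1 : k) ^ (n * (n + 1) / 2) / (n.factorial : k)

/-! On arguments of degree one every Koszul sign cancels the permutation sign and `Sh(n-1,n)` has
`n` elements, so `μₙ₊₁(Γ,…,Γ) = (-1)^{n+1} (n+1) η[μₙ(Γ,…,Γ), Γ]` for `n ≥ 2`, and the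
Maurer–Cartan coefficients absorb exactly these factors. Together with `d[Γ,Γ] = 2[dΓ,Γ]` this
turns the Maurer–Cartan sum `F` into the fixed-point equation `F = -d(Γ + ½η[Γ,Γ]) + η[F, Γ]`.
So `F = 0` gives `d(Γ + ½η[Γ,Γ]) = 0`; conversely `F = η[F, Γ]` pushes `F` into every step of the
`m`-adic filtration of `g ⊗ m`, which vanishes since `m` is nilpotent. -/

lemma Equiv.Perm.sign_eq_signAux {n : ℕ} (σ : Equiv.Perm (Fin n)) :
    Equiv.Perm.sign σ = Equiv.Perm.signAux σ := by
  induction σ using Equiv.Perm.swap_induction_on with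
  | one => simp
  | swap_mul f x y hxy ih =>
    rw [Equiv.Perm.sign_mul, Equiv.Perm.signAux_mul, ih, Equiv.Perm.sign_swap hxy,
      Equiv.Perm.signAux_swap hxy]

lemma koszulSign_one_eq_permSign (k : Type*) [Field k] {n : ℕ} (σ : Equiv.Perm (Fin n)) :
    koszulSign k (fun _ => (1 : ℤ)) σ = permSign k σ := by
  have hinv : ((Equiv.Perm.finPairsLT n).filter fun x => σ x.1 ≤ σ x.2).card
      = (univ.filter fun p : Fin n × Fin n => p.1 < p.2 ∧ σ p.2 < σ p.1).card := by
    refine card_bij' (fun x _ => (x.2, x.1)) (fun p _ => ⟨p.2, p.1⟩) ?_ ?_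
      (fun _ _ => rfl) (fun _ _ => rfl)
    · intro x hx
      simp only [mem_filter, Equiv.Perm.mem_finPairsLT] at hx
      simp only [mem_filter, mem_univ, true_and]
      exact ⟨hx.1, hx.2.lt_of_ne fun h => hx.1.ne' (σ.injective h)⟩
    · intro p hp
      simp only [mem_filter, mem_univ, true_and] at hp
      simp only [mem_filter, Equiv.Perm.mem_finPairsLT]
      exact ⟨hp.1, hp.2.le⟩
  rw [koszulSign, permSign, Equiv.Perm.sign_eq_signAux, Equiv.Perm.signAux, prod_ite,
    prod_const, prod_const_one, mul_one, prod_const, hinv]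
  simp

lemma permSign_mul_koszulSign_one (k : Type*) [Field k] {n : ℕ} (σ : Equiv.Perm (Fin n)) :
    permSign k σ * koszulSign k (fun _ => (1 : ℤ)) σ = 1 := by
  rw [koszulSign_one_eq_permSign, permSign, ← Int.cast_mul, ← Units.val_mul,
    Int.units_mul_self, Units.val_one, Int.cast_one]

lemma shuffles_castSucc {n : ℕ} {σ : Equiv.Perm (Fin (n + 1))} (hσ : σ ∈ shuffles n (n + 1))
    (i : Fin n) : σ i.castSucc = (σ (Fin.last n)).succAbove i := by
  simp only [shuffles, mem_filter, mem_univ, true_and] at hσ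
  have hmono : StrictMono fun i : Fin n => σ i.castSucc :=
    fun a b hab => hσ.1 _ _ hab b.isLt
  have hrange : Set.range (fun i : Fin n => σ i.castSucc) = {σ (Fin.last n)}ᶜ := by
    rw [Set.range_comp' σ Fin.castSucc, Fin.range_castSucc]
    ext x
    rw [Set.mem_compl_singleton_iff, Ne, ← σ.symm_apply_eq, Fin.ext_iff, Fin.val_last,
      Equiv.image_eq_preimage_symm]
    have := (σ.symm x).isLt
    change (σ.symm x : ℕ) < n ↔ _
    omega
  exact congrFun (((hmono.range_inj (Fin.strictMono_succAbove _)).1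
    (hrange.trans (Fin.range_succAbove _).symm))) i

def lastShuffle {n : ℕ} (j : Fin (n + 1)) : Equiv.Perm (Fin (n + 1)) :=
  finSuccEquivLast.trans (finSuccEquiv' j).symm

@[simp] lemma lastShuffle_last {n : ℕ} (j : Fin (n + 1)) : lastShuffle j (Fin.last n) = j := by
  simp [lastShuffle]

@[simp] lemma lastShuffle_castSucc {n : ℕ} (j : Fin (n + 1)) (i : Fin n) :
    lastShuffle j i.castSucc = j.succAbove i := by
  simp [lastShuffle]

lemma lastShuffle_mem_shuffles {n : ℕ} (j : Fin (n + 1)) :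
    lastShuffle j ∈ shuffles n (n + 1) := by
  simp only [shuffles, mem_filter, mem_univ, true_and]
  refine ⟨fun a b hab hb => ?_, fun a b hab ha => by omega⟩
  obtain ⟨a, rfl⟩ : ∃ a' : Fin n, a'.castSucc = a := ⟨a.castLT (by omega), rfl⟩
  obtain ⟨b, rfl⟩ : ∃ b' : Fin n, b'.castSucc = b := ⟨b.castLT hb, rfl⟩
  simpa using Fin.strictMono_succAbove j hab

lemma card_shuffles_last (n : ℕ) : #(shuffles n (n + 1)) = n + 1 := by
  suffices #(shuffles n (n + 1)) = #(univ : Finset (Fin (n + 1))) by simpa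
  refine card_bij (fun σ _ => σ (Fin.last n)) (fun _ _ => mem_univ _) ?_ ?_
  · intro σ hσ τ hτ h
    ext1 x
    induction x using Fin.lastCases with
    | last => exact h
    | cast i => rw [shuffles_castSucc hσ, shuffles_castSucc hτ, h]
  · exact fun j _ => ⟨lastShuffle j, lastShuffle_mem_shuffles j, lastShuffle_last j⟩

section TensorGrade

variable {k : Type*} [Field k] {V : Type*} [AddCommGroup V] [Module k V]
  {R : Type*} [CommRing R] [Algebra k R]

@[simp] lemma tensorBracket_tmul (br : V →ₗ[k] V →ₗ[k] V) (x y : V) (a b : R) :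
    tensorBracket br (x ⊗ₜ[k] a) (y ⊗ₜ[k] b) = br x y ⊗ₜ[k] (a * b) := by
  simp [tensorBracket, TensorProduct.tensorTensorTensorComm_tmul, LinearMap.mul'_apply]

lemma tensorGrade_eq_span (p : Submodule k V) (q : Submodule k R) :
    tensorGrade p q = Submodule.span k (Set.image2 (· ⊗ₜ[k] ·) p q) := by
  rw [tensorGrade, TensorProduct.range_map_eq_span_tmul]
  congr
  ext t
  simp [eq_comm]

lemma tensorGrade_le_iff {p : Submodule k V} {q : Submodule k R}
    {S : Submodule k (V ⊗[k] R)} :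
    tensorGrade p q ≤ S ↔ ∀ x ∈ p, ∀ a ∈ q, x ⊗ₜ[k] a ∈ S := by
  rw [tensorGrade_eq_span, Submodule.span_le, Set.image2_subset_iff]
  rfl

lemma tmul_mem_tensorGrade {p : Submodule k V} {q : Submodule k R} {x : V} {a : R}
    (hx : x ∈ p) (ha : a ∈ q) : x ⊗ₜ[k] a ∈ tensorGrade p q :=
  tensorGrade_le_iff.1 le_rfl x hx a ha

lemma tensorGrade_mono {p p' : Submodule k V} {q q' : Submodule k R} (hp : p ≤ p')
    (hq : q ≤ q') :
    tensorGrade p q ≤ tensorGrade p' q' :=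
  tensorGrade_le_iff.2 fun _ hx _ ha => tmul_mem_tensorGrade (hp hx) (hq ha)

lemma tensorGrade_bot_right (p : Submodule k V) : tensorGrade p (⊥ : Submodule k R) = ⊥ :=
  eq_bot_iff.2 <| tensorGrade_le_iff.2 fun x _ _ ha => by
    rw [(Submodule.mem_bot k).1 ha, TensorProduct.tmul_zero]
    exact zero_mem _

lemma rTensor_mem_tensorGrade {p p' : Submodule k V} {q : Submodule k R} {f : V →ₗ[k] V}
    (hf : ∀ x ∈ p, f x ∈ p') {z : V ⊗[k] R} (hz : z ∈ tensorGrade p q) :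
    f.rTensor R z ∈ tensorGrade p' q :=
  tensorGrade_le_iff (S := (tensorGrade p' q).comap (f.rTensor R)).2
    (fun x hx _ ha => tmul_mem_tensorGrade (hf x hx) ha) hz

lemma bilinear_mem_of_mem_tensorGrade {W : Type*} [AddCommGroup W] [Module k W]
    (B : (V ⊗[k] R) →ₗ[k] (V ⊗[k] R) →ₗ[k] W) {p p' : Submodule k V} {q q' : Submodule k R}
    {S : Submodule k W}
    (hB : ∀ x ∈ p, ∀ a ∈ q, ∀ y ∈ p', ∀ b ∈ q', B (x ⊗ₜ[k] a) (y ⊗ₜ[k] b) ∈ S)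
    {z w : V ⊗[k] R} (hz : z ∈ tensorGrade p q) (hw : w ∈ tensorGrade p' q') : B z w ∈ S := by
  have hle : Submodule.map₂ B (tensorGrade p q) (tensorGrade p' q') ≤ S := by
    rw [tensorGrade_eq_span, tensorGrade_eq_span, Submodule.map₂_span_span, Submodule.span_le]
    rintro _ ⟨_, ⟨x, hx, a, ha, rfl⟩, _, ⟨y, hy, b, hb, rfl⟩, rfl⟩
    exact hB x hx a ha y hy b hb
  exact hle (Submodule.apply_mem_map₂ B hz hw)

lemma bilinear_eq_of_mem_tensorGrade {W : Type*} [AddCommGroup W] [Module k W]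
    (B₁ B₂ : (V ⊗[k] R) →ₗ[k] (V ⊗[k] R) →ₗ[k] W) {p p' : Submodule k V} {q q' : Submodule k R}
    (hB : ∀ x ∈ p, ∀ a : R, ∀ y ∈ p', ∀ b : R,
      B₁ (x ⊗ₜ[k] a) (y ⊗ₜ[k] b) = B₂ (x ⊗ₜ[k] a) (y ⊗ₜ[k] b))
    {z w : V ⊗[k] R} (hz : z ∈ tensorGrade p q) (hw : w ∈ tensorGrade p' q') :
    B₁ z w = B₂ z w := by
  have h := bilinear_mem_of_mem_tensorGrade (B₁ - B₂) (S := ⊥)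
    (fun x hx a _ y hy b _ => by simp [hB x hx a y hy b]) hz hw
  simpa [sub_eq_zero] using h

lemma tensorBracket_mem_tensorGrade (br : V →ₗ[k] V →ₗ[k] V)
    {p p' p'' : Submodule k V} {q q' q'' : Submodule k R}
    (hbr : ∀ x ∈ p, ∀ y ∈ p', br x y ∈ p'') (hq : ∀ a ∈ q, ∀ b ∈ q', a * b ∈ q'')
    {z w : V ⊗[k] R} (hz : z ∈ tensorGrade p q) (hw : w ∈ tensorGrade p' q') :
    tensorBracket br z w ∈ tensorGrade p'' q'' :=
  bilinear_mem_of_mem_tensorGrade _ (fun x hx a ha y hy b hb => by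
    rw [tensorBracket_tmul]
    exact tmul_mem_tensorGrade (hbr x hx y hy) (hq a ha b hb)) hz hw

end TensorGrade

section DGLA

variable {k : Type*} [Field k] {V : Type*} [AddCommGroup V] [Module k V]

lemma GradedDGLA.d_bracket_of_mem_one (D : GradedDGLA k V) {x y : V} (hx : x ∈ D.grade 1)
    (hy : y ∈ D.grade 1) :
    D.d (D.bracket x y) = D.bracket (D.d x) y + D.bracket (D.d y) x := by
  have hdy : D.d y ∈ D.grade 2 := D.d_grade 1 y hy
  rw [D.leibniz 1 x y hx, D.antisymm 1 2 x (D.d y) hx hdy]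
  norm_num

lemma GradedDGLA.rTensor_d_tensorBracket_self (D : GradedDGLA k V) {R : Type*} [CommRing R]
    [Algebra k R] {q : Submodule k R} {Γ : V ⊗[k] R} (hΓ : Γ ∈ tensorGrade (D.grade 1) q) :
    D.d.rTensor R (tensorBracket D.bracket Γ Γ)
      = (2 : k) • tensorBracket D.bracket (D.d.rTensor R Γ) Γ := by
  have hB := bilinear_eq_of_mem_tensorGrade ((tensorBracket D.bracket).compr₂ (D.d.rTensor R))
    ((tensorBracket D.bracket).comp (D.d.rTensor R)
      + ((tensorBracket D.bracket).comp (D.d.rTensor R)).flip)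
    (fun x hx a y hy b => by simp [D.d_bracket_of_mem_one hx hy, TensorProduct.add_tmul, mul_comm])
    hΓ hΓ
  simpa [two_smul] using hB

end DGLA

lemma mcCoeff_succ_mul (k : Type*) [Field k] [CharZero k] (m : ℕ) :
    mcCoeff k (m + 1) * ((-1 : k) ^ (m + 1) * ((m + 1 : ℕ) : k)) = mcCoeff k m := by
  have hexp : (m + 1) * (m + 1 + 1) / 2 = m * (m + 1) / 2 + (m + 1) := by
    rw [show (m + 1) * (m + 1 + 1) = m * (m + 1) + (m + 1) * 2 by ring,
      Nat.add_mul_div_right _ _ two_pos]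
  have hm : ((m + 1 : ℕ) : k) ≠ 0 := Nat.cast_ne_zero.2 m.succ_ne_zero
  have hfact : (m.factorial : k) ≠ 0 := Nat.cast_ne_zero.2 m.factorial_ne_zero
  rw [mcCoeff, mcCoeff, hexp, Nat.factorial_succ, Nat.cast_mul]
  field_simp
  rw [pow_add, mul_assoc, ← pow_add, ← two_mul, pow_mul, neg_one_sq, one_pow, mul_one]

section MaurerCartan

variable {k : Type*} [Field k] {W : Type*} [AddCommGroup W] [Module k W]
  (d : W →ₗ[k] W) (br : W →ₗ[k] W →ₗ[k] W) (η : W →ₗ[k] W) (Γ : W)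

def mcSum (L : ℕ) : W :=
  ∑ n ∈ Icc 1 L, mcCoeff k n • muRec d br η n (fun _ => (1 : ℤ)) (fun _ => Γ)

lemma mcSum_succ (L : ℕ) :
    mcSum d br η Γ (L + 1)
      = mcSum d br η Γ L + mcCoeff k (L + 1) • muRec d br η (L + 1) (fun _ => 1) (fun _ => Γ) :=
  sum_Icc_succ_top (by omega) _

lemma muRec_add_three_const (n : ℕ) :
    muRec d br η (n + 3) (fun _ => 1) (fun _ => Γ)
      = ((-1 : k) ^ (n + 3) * ((n + 3 : ℕ) : k)) •
          η (br (muRec d br η (n + 2) (fun _ => 1) (fun _ => Γ)) Γ) := by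
  rw [muRec, sum_congr rfl fun σ _ => by rw [permSign_mul_koszulSign_one, one_smul], sum_const,
    card_shuffles_last, ← Nat.cast_smul_eq_nsmul k, smul_smul]

lemma mcCoeff_smul_muRec_add_three [CharZero k] (n : ℕ) :
    mcCoeff k (n + 3) • muRec d br η (n + 3) (fun _ => 1) (fun _ => Γ)
      = η (br (mcCoeff k (n + 2) • muRec d br η (n + 2) (fun _ => 1) (fun _ => Γ)) Γ) := by
  rw [muRec_add_three_const, smul_smul, mcCoeff_succ_mul k (n + 2), map_smul br,
    LinearMap.smul_apply, map_smul η]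

lemma mcSum_add_two [CharZero k] (hΓ : d (br Γ Γ) = (2 : k) • br (d Γ) Γ) (l : ℕ) :
    mcSum d br η Γ (l + 2)
      = -d (Γ + (1 / 2 : k) • η (br Γ Γ)) + η (br (mcSum d br η Γ (l + 1)) Γ) := by
  induction l with
  | zero =>
    have h1 : mcCoeff k 1 = -1 := by norm_num [mcCoeff]
    have h2 : mcCoeff k 2 = -(1 / 2) := by norm_num [mcCoeff]
    rw [mcSum_succ, mcSum_succ, mcSum, Icc_eq_empty (by omega), sum_empty]
    simp only [muRec, h1, h2, hΓ, zero_add, map_add, map_smul, LinearMap.smul_apply]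
    module
  | succ l ih =>
    conv_lhs => rw [mcSum_succ _ _ _ _ (l + 2), ih]
    rw [mcCoeff_smul_muRec_add_three, add_assoc, ← map_add η, ← LinearMap.add_apply, ← map_add br,
      ← mcSum_succ]

end MaurerCartan

section Filtration

variable {k : Type*} [Field k] {W : Type*} [AddCommGroup W] [Module k W]
  {d : W →ₗ[k] W} {br : W →ₗ[k] W →ₗ[k] W} {η : W →ₗ[k] W} {Γ : W} {M : ℕ → Submodule k W}

lemma muRec_const_mem (hd : ∀ j, ∀ x ∈ M j, d x ∈ M j) (hη : ∀ j, ∀ x ∈ M j, η x ∈ M j)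
    (hbr : ∀ s t, ∀ x ∈ M s, ∀ y ∈ M t, br x y ∈ M (s + t)) (hΓ : Γ ∈ M 1) (n : ℕ) :
    muRec d br η (n + 1) (fun _ => 1) (fun _ => Γ) ∈ M (n + 1) := by
  induction n with
  | zero => exact hd 1 Γ hΓ
  | succ n ih =>
    rcases n with _ | n
    · have hΓΓ := hbr 1 1 Γ hΓ Γ hΓ
      exact add_mem (hd 2 _ (hη 2 _ hΓΓ)) (hη 2 _ (hd 2 _ hΓΓ))
    · rw [muRec_add_three_const]
      exact Submodule.smul_mem _ _ (hη _ _ (hbr _ 1 _ ih Γ hΓ))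

lemma mcSum_mem (hd : ∀ j, ∀ x ∈ M j, d x ∈ M j) (hη : ∀ j, ∀ x ∈ M j, η x ∈ M j)
    (hbr : ∀ s t, ∀ x ∈ M s, ∀ y ∈ M t, br x y ∈ M (s + t)) (hM : Antitone M) (hΓ : Γ ∈ M 1)
    (L : ℕ) : mcSum d br η Γ L ∈ M 1 := by
  refine sum_mem fun n hn => Submodule.smul_mem _ _ ?_
  obtain ⟨m, rfl⟩ : ∃ m, n = m + 1 := ⟨n - 1, by rw [mem_Icc] at hn; omega⟩
  exact hM (by omega) (muRec_const_mem hd hη hbr hΓ m)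

lemma eq_zero_of_eq_apply_bracket (hη : ∀ j, ∀ x ∈ M j, η x ∈ M j)
    (hbr : ∀ s t, ∀ x ∈ M s, ∀ y ∈ M t, br x y ∈ M (s + t)) (hM : Antitone M) (hΓ : Γ ∈ M 1)
    {N : ℕ} (hMN : M N = ⊥) {x : W} (hx : x ∈ M 1) (hfix : x = η (br x Γ)) : x = 0 := by
  have hdeep : ∀ j, x ∈ M (j + 1) := by
    intro j
    induction j with
    | zero => exact hx
    | succ j ih =>
      rw [hfix]
      exact hη _ _ (hbr _ 1 _ ih Γ hΓ)
  simpa [hMN] using hM (Nat.le_succ N) (hdeep N)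

lemma mcSum_eq_zero_iff [CharZero k] (hd : ∀ j, ∀ x ∈ M j, d x ∈ M j)
    (hη : ∀ j, ∀ x ∈ M j, η x ∈ M j) (hbr : ∀ s t, ∀ x ∈ M s, ∀ y ∈ M t, br x y ∈ M (s + t))
    (hM : Antitone M) (hΓ : Γ ∈ M 1) {N : ℕ} (hN : 1 ≤ N) (hMN : M N = ⊥)
    (hdΓΓ : d (br Γ Γ) = (2 : k) • br (d Γ) Γ) :
    mcSum d br η Γ N = 0 ↔ d (Γ + (1 / 2 : k) • η (br Γ Γ)) = 0 := by
  have hstable : mcSum d br η Γ (N + 1) = mcSum d br η Γ N := by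
    have hlast := hM (Nat.le_succ N) (muRec_const_mem hd hη hbr hΓ N)
    rw [hMN, Submodule.mem_bot] at hlast
    rw [mcSum_succ, hlast, smul_zero, add_zero]
  have hfix : mcSum d br η Γ N
      = -d (Γ + (1 / 2 : k) • η (br Γ Γ)) + η (br (mcSum d br η Γ N) Γ) := by
    obtain ⟨l, rfl⟩ : ∃ l, N = l + 1 := ⟨N - 1, by omega⟩
    exact hstable.symm.trans (mcSum_add_two d br η Γ hdΓΓ l)
  constructor
  · intro h
    rw [h, map_zero, LinearMap.zero_apply, map_zero, add_zero, eq_comm, neg_eq_zero] at hfix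
    exact hfix
  · intro h
    rw [h, neg_zero, zero_add] at hfix
    exact eq_zero_of_eq_apply_bracket hη hbr hM hΓ hMN (mcSum_mem hd hη hbr hM hΓ N) hfix

end Filtration

def tensorIdealFiltration (k V : Type*) [Field k] [AddCommGroup V] [Module k V] {R : Type*}
    [CommRing R] [Algebra k R] (I : Ideal R) (j : ℕ) : Submodule k (V ⊗[k] R) :=
  tensorGrade ⊤ ((I ^ j).restrictScalars k)

section IdealFiltration

variable {k : Type*} [Field k] {V : Type*} [AddCommGroup V] [Module k V]
  {R : Type*} [CommRing R] [Algebra k R]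

lemma rTensor_mem_tensorIdealFiltration (f : V →ₗ[k] V) {I : Ideal R} {j : ℕ} {z : V ⊗[k] R}
    (hz : z ∈ tensorIdealFiltration k V I j) : f.rTensor R z ∈ tensorIdealFiltration k V I j :=
  rTensor_mem_tensorGrade (fun _ _ => Submodule.mem_top) hz

lemma tensorBracket_mem_tensorIdealFiltration (br : V →ₗ[k] V →ₗ[k] V) {I : Ideal R} {s t : ℕ}
    {z w : V ⊗[k] R} (hz : z ∈ tensorIdealFiltration k V I s)
    (hw : w ∈ tensorIdealFiltration k V I t) :
    tensorBracket br z w ∈ tensorIdealFiltration k V I (s + t) :=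
  tensorBracket_mem_tensorGrade br (fun _ _ _ _ => Submodule.mem_top)
    (fun _ ha _ hb => by
      rw [Submodule.restrictScalars_mem, pow_add] at *
      exact Ideal.mul_mem_mul ha hb) hz hw

lemma tensorIdealFiltration_antitone (I : Ideal R) : Antitone (tensorIdealFiltration k V I) :=
  fun _ _ hst => tensorGrade_mono le_rfl fun _ ha => Ideal.pow_le_pow_right hst ha

lemma tensorIdealFiltration_eq_bot {I : Ideal R} {N : ℕ} (hN : I ^ N = ⊥) :
    tensorIdealFiltration k V I N = ⊥ := by
  rw [tensorIdealFiltration, hN, Submodule.restrictScalars_bot, tensorGrade_bot_right]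

end IdealFiltration

theorem statement2_general {k V : Type*} [Field k] [CharZero k] [AddCommGroup V] [Module k V]
    (D : GradedDGLA k V) (η : V →ₗ[k] V)
    (R : Type*) [CommRing R] [Algebra k R] [IsLocalRing R]
    (N : ℕ) (hN : IsLocalRing.maximalIdeal R ^ N = ⊥)
    (Γ : V ⊗[k] R) (hΓ : Γ ∈ tensorGrade (D.grade 1) (maxIdealSub k R)) :
    (∑ n ∈ Finset.Icc 1 N, mcCoeff k n •
        muRec (LinearMap.rTensor R D.d) (tensorBracket D.bracket) (LinearMap.rTensor R η)
          n (fun _ => (1 : ℤ)) (fun _ => Γ)) = 0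
      ↔ (LinearMap.rTensor R D.d)
          (Γ + (1 / 2 : k) •
            (LinearMap.rTensor R η) (tensorBracket D.bracket Γ Γ)) = 0 := by
  have hN1 : 1 ≤ N := Nat.one_le_iff_ne_zero.2 fun h0 => by simp [h0] at hN
  have hΓ1 : Γ ∈ tensorIdealFiltration k V (IsLocalRing.maximalIdeal R) 1 :=
    tensorGrade_mono le_top (by rw [pow_one]; exact le_rfl) hΓ
  exact mcSum_eq_zero_iff (M := tensorIdealFiltration k V (IsLocalRing.maximalIdeal R))
    (fun _ _ => rTensor_mem_tensorIdealFiltration D.d)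
    (fun _ _ => rTensor_mem_tensorIdealFiltration η)
    (fun _ _ _ hz _ hw => tensorBracket_mem_tensorIdealFiltration D.bracket hz hw)
    (tensorIdealFiltration_antitone _) hΓ1 hN1 (tensorIdealFiltration_eq_bot hN)
    (D.rTensor_d_tensorBracket_self hΓ)

theorem statement2 {k V : Type*} [Field k] [CharZero k] [AddCommGroup V] [Module k V]
    (D : GradedDGLA k V) (η : V →ₗ[k] V)
    (hη : ∀ (i : ℤ) (v : V), v ∈ D.grade i → η v ∈ D.grade (i - 1))
    (R : Type*) [CommRing R] [Algebra k R] [IsLocalRing R] [IsArtinianRing R]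
    (N : ℕ) (hN : IsLocalRing.maximalIdeal R ^ N = ⊥)
    (Γ : V ⊗[k] R) (hΓ : Γ ∈ tensorGrade (D.grade 1) (maxIdealSub k R)) :
    (∑ n ∈ Finset.Icc 1 N, mcCoeff k n •
        muRec (LinearMap.rTensor R D.d) (tensorBracket D.bracket) (LinearMap.rTensor R η)
          n (fun _ => (1 : ℤ)) (fun _ => Γ)) = 0
      ↔ (LinearMap.rTensor R D.d)
          (Γ + (1 / 2 : k) •
            (LinearMap.rTensor R η) (tensorBracket D.bracket Γ Γ)) = 0 :=
  statement2_general D η R N hN Γ hΓ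
end
end

section
/- Let (g, d, [·,·]) be a differential graded Lie algebra over a field k of characteristic zero, η : g → g a linear map of degree −1, and μₙ the maps of Theorem 3.1. Then each μₙ is graded antisymmetric, i.e. for all homogeneous v₁,…,vₙ and each 1 ≤ i < n, μₙ(v₁,…,vᵢ,v_{i+1},…,vₙ) = −(−1)^{ṽᵢ ṽ_{i+1}} μₙ(v₁,…,v_{i+1},vᵢ,…,vₙ), and each μₙ has degree 2−n, i.e. μₙ(v₁,…,vₙ) ∈ g^{i₁+…+iₙ+2−n} whenever vⱼ ∈ g^{iⱼ}. Hence μₙ descends to a map Λⁿg → g[2−n]. -/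
open Finset
open scoped TensorProduct

noncomputable section

/-!
The `(n-1,1)`-shuffles are exactly the cycles `(m m+1 … n-1)` moving the `m`-th argument to the
end, so `μₙ(v)` is a sum over `m` of `η[μₙ₋₁(v without vₘ), vₘ]`, weighted by the sign
`(-1)^(n-1-m) (-1)^(|vₘ|(|vₘ₊₁| + ⋯ + |vₙ₋₁|))` of that cycle. Since `d`, `[·,·]` and `η` have
degrees `1`, `0` and `-1`, the degree of `μₙ` follows by induction. Exchanging two adjacent
arguments `vₐ, vₐ₊₁` matches the term of `m` with the term of `swap a (a+1) m`: for `m ∉ {a, a+1}`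
the inner `μₙ₋₁` picks up the Koszul sign by induction (the base case `n = 2` being graded
antisymmetry of the bracket), while the terms `m = a` and `m = a+1` trade places and their weights
differ by exactly `-(-1)^(|vₐ||vₐ₊₁|)`.
-/

open Equiv

namespace Fin

lemma val_succAbove {N : ℕ} (m : Fin (N + 1)) (i : Fin N) :
    (m.succAbove i : ℕ) = if (i : ℕ) < m then (i : ℕ) else (i : ℕ) + 1 := by
  rcases lt_or_ge (castSucc i) m with h | h
  · rw [succAbove_of_castSucc_lt _ _ h, val_castSucc, if_pos (by simpa [lt_def] using h)]
  · rw [succAbove_of_le_castSucc _ _ h, val_succ, if_neg (by simpa [le_def] using h)]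

lemma cycleIcc_last_comp_castSucc {N : ℕ} (m : Fin (N + 1)) :
    cycleIcc m (last N) ∘ castSucc = m.succAbove := by
  rw [← succAbove_last, cycleIcc_comp_succAbove _ _ (le_last m)]

lemma cycleIcc_last_apply_last {N : ℕ} (m : Fin (N + 1)) : cycleIcc m (last N) (last N) = m :=
  cycleIcc_of_last (le_last m)

lemma Ioi_eq_insert_Ioi {N : ℕ} {a b : Fin N} (hab : (a : ℕ) + 1 = b) :
    Ioi a = insert b (Ioi b) := by
  ext j
  simp only [mem_Ioi, mem_insert, lt_def, Fin.ext_iff]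
  omega

lemma swap_comp_succAbove_of_succ_eq {N : ℕ} {a b : Fin (N + 1)} (hab : (a : ℕ) + 1 = b) :
    swap a b ∘ b.succAbove = a.succAbove := by
  funext i
  rw [Function.comp_apply, swap_apply_def]
  split_ifs <;> simp only [Fin.ext_iff, val_succAbove] at * <;> split_ifs at * <;> omega

lemma swap_comp_succAbove_of_succ_eq' {N : ℕ} {a b : Fin (N + 1)} (hab : (a : ℕ) + 1 = b) :
    swap a b ∘ a.succAbove = b.succAbove := by
  rw [← swap_comp_succAbove_of_succ_eq hab]
  ext1 i
  exact swap_apply_self a b _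

lemma exists_swap_comp_succAbove {N : ℕ} {a b m : Fin (N + 1)} (hab : (a : ℕ) + 1 = b)
    (ha : m ≠ a) (hb : m ≠ b) :
    ∃ a' b' : Fin N, (a' : ℕ) + 1 = b' ∧ m.succAbove a' = a ∧ m.succAbove b' = b ∧
      swap a b ∘ m.succAbove = m.succAbove ∘ swap a' b' := by
  obtain ⟨a', rfl⟩ := exists_succAbove_eq ha.symm
  obtain ⟨b', rfl⟩ := exists_succAbove_eq hb.symm
  refine ⟨a', b', ?_, rfl, rfl, funext fun i => (succAbove_right_injective.map_swap _ _ _).symm⟩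
  simp only [val_succAbove] at hab
  split_ifs at hab <;> omega

end Fin

lemma Finset.sum_comp_swap_of_mem_iff {ι M : Type*} [DecidableEq ι] [AddCommMonoid M]
    {s : Finset ι} {a b : ι} (h : a ∈ s ↔ b ∈ s) (f : ι → M) :
    ∑ j ∈ s, f (swap a b j) = ∑ j ∈ s, f j :=
  sum_equiv (swap a b) (fun j => by rw [swap_apply_def]; split_ifs <;> simp_all) (fun _ _ => rfl)

lemma zpow_sum₀ {G : Type*} [CommGroupWithZero G] {a : G} (ha : a ≠ 0) {ι : Type*}
    (s : Finset ι) (f : ι → ℤ) : a ^ (∑ i ∈ s, f i) = ∏ i ∈ s, a ^ f i := by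
  classical
  induction s using Finset.induction_on with
  | empty => simp
  | insert i s hi ih => rw [sum_insert hi, prod_insert hi, zpow_add₀ ha, ih]

section

variable {k : Type*} [Field k]

lemma neg_one_zpow_mul_self (z : ℤ) : (-1 : k) ^ z * (-1) ^ z = 1 := by
  rw [← mul_zpow]
  norm_num

section Shuffles

variable {N : ℕ}

lemma cycleIcc_last_mem_shuffles (m : Fin (N + 1)) :
    Fin.cycleIcc m (Fin.last N) ∈ shuffles N (N + 1) := by
  refine mem_filter.2 ⟨mem_univ _, fun a b hab hb => ?_, fun a b hab ha => by omega⟩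
  obtain ⟨a, rfl⟩ : ∃ a' : Fin N, Fin.castSucc a' = a := ⟨⟨a, by omega⟩, rfl⟩
  obtain ⟨b, rfl⟩ : ∃ b' : Fin N, Fin.castSucc b' = b := ⟨⟨b, hb⟩, rfl⟩
  have key := congrFun (Fin.cycleIcc_last_comp_castSucc m)
  simp only [Function.comp_apply] at key
  rw [key, key]
  exact Fin.strictMono_succAbove m hab

lemma eq_cycleIcc_last_of_mem_shuffles {σ : Perm (Fin (N + 1))} (hσ : σ ∈ shuffles N (N + 1)) :
    σ = Fin.cycleIcc (σ (Fin.last N)) (Fin.last N) := by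
  set m := σ (Fin.last N)
  have hmono : StrictMono (σ ∘ Fin.castSucc) := fun i j hij =>
    (mem_filter.1 hσ).2.1 _ _ hij j.isLt
  have hrange : Set.range (σ ∘ Fin.castSucc) = Set.range m.succAbove := by
    rw [Set.range_comp, ← Fin.succAbove_last, Fin.range_succAbove, Fin.range_succAbove,
      Set.image_compl_eq σ.bijective, Set.image_singleton]
  have hcast : σ ∘ Fin.castSucc = m.succAbove :=
    (hmono.range_inj (Fin.strictMono_succAbove m)).1 hrange
  ext1 x
  rcases Fin.eq_castSucc_or_eq_last x with ⟨i, rfl⟩ | rfl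
  · rw [← Function.comp_apply (f := σ), hcast, ← Fin.cycleIcc_last_comp_castSucc m]; rfl
  · rw [Fin.cycleIcc_last_apply_last]

lemma sum_shuffles_eq_sum_cycleIcc_last {M : Type*} [AddCommMonoid M] (f : Perm (Fin (N + 1)) → M) :
    ∑ σ ∈ shuffles N (N + 1), f σ = ∑ m, f (Fin.cycleIcc m (Fin.last N)) :=
  sum_nbij' (fun σ => σ (Fin.last N)) (fun m => Fin.cycleIcc m (Fin.last N))
    (fun _ _ => mem_univ _) (fun m _ => cycleIcc_last_mem_shuffles m)
    (fun _ hσ => (eq_cycleIcc_last_of_mem_shuffles hσ).symm)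
    (fun m _ => Fin.cycleIcc_last_apply_last m)
    (fun _ hσ => congrArg f (eq_cycleIcc_last_of_mem_shuffles hσ))

lemma cycleIcc_last_inversion_iff (m : Fin (N + 1)) (p : Fin (N + 1) × Fin (N + 1)) :
    (p.1 < p.2 ∧ Fin.cycleIcc m (Fin.last N) p.2 < Fin.cycleIcc m (Fin.last N) p.1) ↔
      p.2 = Fin.last N ∧ m < Fin.cycleIcc m (Fin.last N) p.1 := by
  set σ := Fin.cycleIcc m (Fin.last N)
  obtain ⟨p1, p2⟩ := p
  constructor
  · rintro ⟨h12, hinv⟩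
    rcases Fin.eq_castSucc_or_eq_last p2 with ⟨i2, rfl⟩ | rfl
    · obtain ⟨i1, rfl⟩ := Fin.exists_castSucc_eq.2 (h12.trans (Fin.castSucc_lt_last i2)).ne
      simp only [σ, ← Function.comp_apply (f := Fin.cycleIcc _ _),
        Fin.cycleIcc_last_comp_castSucc] at hinv
      exact absurd hinv (Fin.strictMono_succAbove m (Fin.castSucc_lt_castSucc_iff.1 h12)).asymm
    · exact ⟨rfl, by rwa [Fin.cycleIcc_last_apply_last] at hinv⟩
  · rintro ⟨rfl, hm⟩
    refine ⟨Fin.lt_last_iff_ne_last.2 fun h => ?_, by rwa [Fin.cycleIcc_last_apply_last]⟩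
    rw [h, Fin.cycleIcc_last_apply_last] at hm
    exact hm.false

lemma permSign_cycleIcc_last (m : Fin (N + 1)) :
    permSign k (Fin.cycleIcc m (Fin.last N)) = (-1 : k) ^ (N - m : ℕ) := by
  rw [permSign, Fin.sign_cycleIcc_of_le (Fin.le_last m)]
  simp

lemma koszulSign_cycleIcc_last (deg : Fin (N + 1) → ℤ) (m : Fin (N + 1)) :
    koszulSign k deg (Fin.cycleIcc m (Fin.last N)) = (-1 : k) ^ (deg m * ∑ j ∈ Ioi m, deg j) := by
  set σ := Fin.cycleIcc m (Fin.last N)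
  rw [koszulSign, filter_congr fun p _ => cycleIcc_last_inversion_iff m p, mul_sum,
    zpow_sum₀ (by norm_num)]
  refine prod_nbij' (fun p => σ p.1) (fun j => (σ.symm j, Fin.last N)) ?_ ?_ ?_ ?_ ?_ <;>
    simp_all [σ, Fin.cycleIcc_last_apply_last, mul_comm]

end Shuffles

/-- The sign `(-1)^σ e(σ)` of the `(N-1,1)`-shuffle `σ` that moves the `m`-th argument to the
end. -/
def removalSign (k : Type*) [Field k] {N : ℕ} (deg : Fin N → ℤ) (m : Fin N) : k :=
  (-1) ^ (N - 1 - m : ℕ) * (-1) ^ (deg m * ∑ j ∈ Ioi m, deg j)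

section Operations

variable {W : Type*} [AddCommGroup W] [Module k W]
  (d : W →ₗ[k] W) (br : W →ₗ[k] W →ₗ[k] W) (η : W →ₗ[k] W)

lemma muRec_add_three (n : ℕ) (deg : Fin (n + 3) → ℤ) (v : Fin (n + 3) → W) :
    muRec d br η (n + 3) deg v = (-1 : k) ^ (n + 3) • ∑ m : Fin (n + 3),
      removalSign k deg m •
        η (br (muRec d br η (n + 2) (deg ∘ m.succAbove) (v ∘ m.succAbove)) (v m)) := by
  rw [muRec, sum_shuffles_eq_sum_cycleIcc_last]
  simp only [permSign_cycleIcc_last, koszulSign_cycleIcc_last, Fin.cycleIcc_last_apply_last,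
    ← Fin.cycleIcc_last_comp_castSucc, removalSign]
  rfl

end Operations

section Grading

variable {V : Type*} [AddCommGroup V] [Module k V]

theorem muRec_mem_grade (D : GradedDGLA k V) (η : V →ₗ[k] V)
    (hη : ∀ (i : ℤ) (v : V), v ∈ D.grade i → η v ∈ D.grade (i - 1)) :
    ∀ {N : ℕ} {deg : Fin N → ℤ} {v : Fin N → V}, (∀ j, v j ∈ D.grade (deg j)) →
      muRec D.d D.bracket η N deg v ∈ D.grade ((∑ j, deg j) + 2 - N)
  | 0, _, _, _ => zero_mem _
  | 1, deg, v, hv => by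
    simpa [muRec, add_sub_assoc, one_add_one_eq_two] using D.d_grade _ _ (hv 0)
  | 2, deg, v, hv => by
    have hbr := D.bracket_grade _ _ _ _ (hv 0) (hv 1)
    have hdη := D.d_grade _ _ (hη _ _ hbr)
    have hηd := hη _ _ (D.d_grade _ _ hbr)
    simp only [sub_add_cancel, add_sub_cancel_right] at hdη hηd
    simpa [muRec, Fin.sum_univ_two] using add_mem hdη hηd
  | n + 3, deg, v, hv => by
    rw [muRec_add_three]
    refine Submodule.smul_mem _ _ (sum_mem fun m _ => Submodule.smul_mem _ _ ?_)
    have hμ := muRec_mem_grade D η hη (deg := deg ∘ m.succAbove) (v := v ∘ m.succAbove)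
      fun i => hv _
    convert hη _ _ (D.bracket_grade _ _ _ _ hμ (hv m)) using 2
    rw [Fin.sum_univ_succAbove deg m, Function.comp_def]
    push_cast
    ring

end Grading

section Antisymmetry

variable {N : ℕ}

lemma removalSign_comp_swap_of_ne (deg : Fin N → ℤ) {a b m : Fin N}
    (hab : (a : ℕ) + 1 = b) (ha : m ≠ a) (hb : m ≠ b) :
    removalSign k (deg ∘ swap a b) m = removalSign k deg m := by
  have hIoi : a ∈ Ioi m ↔ b ∈ Ioi m := by
    simp only [mem_Ioi, Fin.lt_def]
    have := Fin.val_ne_of_ne ha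
    have := Fin.val_ne_of_ne hb
    omega
  simp only [removalSign, Function.comp_apply, swap_apply_of_ne_of_ne ha hb,
    sum_comp_swap_of_mem_iff hIoi]

lemma removalSign_comp_swap_left (deg : Fin N → ℤ) {a b : Fin N}
    (hab : (a : ℕ) + 1 = b) :
    removalSign k (deg ∘ swap a b) a = -((-1) ^ (deg a * deg b) * removalSign k deg b) := by
  have hIoi : Ioi a = insert b (Ioi b) := Fin.Ioi_eq_insert_Ioi hab
  have hb : b ∉ Ioi b := by simp
  have hN : N - 1 - a = (N - 1 - b) + 1 := by have := b.isLt; omega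
  simp only [removalSign, Function.comp_apply, swap_apply_left, hIoi, sum_insert hb,
    swap_apply_right, sum_comp_swap_of_mem_iff (show a ∈ Ioi b ↔ b ∈ Ioi b by
      simp only [mem_Ioi, Fin.lt_def]; omega), hN, pow_succ, mul_add,
      zpow_add₀ (show (-1 : k) ≠ 0 by norm_num), mul_comm (deg b) (deg a)]
  ring

lemma removalSign_comp_swap_right (deg : Fin N → ℤ) {a b : Fin N}
    (hab : (a : ℕ) + 1 = b) :
    removalSign k (deg ∘ swap a b) b = -((-1) ^ (deg a * deg b) * removalSign k deg a) := by
  have h := removalSign_comp_swap_left (k := k) (deg ∘ swap a b) hab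
  have hss : deg ∘ swap a b ∘ swap a b = deg := by ext; simp
  simp only [Function.comp_assoc, hss, Function.comp_apply, swap_apply_left,
    swap_apply_right, mul_comm (deg b)] at h
  linear_combination (-1 : k) ^ (deg a * deg b) * h -
    removalSign k (deg ∘ swap a b) b * neg_one_zpow_mul_self (k := k) (deg a * deg b)

variable {V : Type*} [AddCommGroup V] [Module k V]

def IsGradedAntisymm (grade : ℤ → Submodule k V)
    (f : (Fin N → ℤ) → (Fin N → V) → V) : Prop :=
  ∀ (deg : Fin N → ℤ) (v : Fin N → V), (∀ j, v j ∈ grade (deg j)) →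
    ∀ a b : Fin N, (a : ℕ) + 1 = b →
      f (deg ∘ swap a b) (v ∘ swap a b) = -((-1 : k) ^ (deg a * deg b) • f deg v)

lemma isGradedAntisymm_muRec_two (D : GradedDGLA k V) (η : V →ₗ[k] V) :
    IsGradedAntisymm D.grade (muRec D.d D.bracket η 2) := by
  intro deg v hv a b hab
  obtain ⟨rfl, rfl⟩ : a = 0 ∧ b = 1 := by omega
  simp only [muRec, Function.comp_apply, swap_apply_left, swap_apply_right,
    D.antisymm _ _ _ _ (hv 1) (hv 0), map_neg, map_smul, smul_add, neg_add, mul_comm (deg 1)]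

lemma isGradedAntisymm_muRec_add_three {grade : ℤ → Submodule k V}
    {d : V →ₗ[k] V} {br : V →ₗ[k] V →ₗ[k] V} {η : V →ₗ[k] V} {n : ℕ}
    (h : IsGradedAntisymm grade (muRec d br η (n + 2))) :
    IsGradedAntisymm grade (muRec d br η (n + 3)) := by
  intro deg v hv a b hab
  have key : ∀ m, removalSign k (deg ∘ swap a b) (swap a b m) •
      η (br (muRec d br η (n + 2) ((deg ∘ swap a b) ∘ (swap a b m).succAbove)
        ((v ∘ swap a b) ∘ (swap a b m).succAbove)) ((v ∘ swap a b) (swap a b m))) =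
      -((-1 : k) ^ (deg a * deg b) • removalSign k deg m •
        η (br (muRec d br η (n + 2) (deg ∘ m.succAbove) (v ∘ m.succAbove)) (v m))) := by
    intro m
    rw [Function.comp_apply, swap_apply_self, Function.comp_assoc, Function.comp_assoc]
    by_cases ha : m = a
    · subst ha
      rw [swap_apply_left, Fin.swap_comp_succAbove_of_succ_eq hab,
        removalSign_comp_swap_right deg hab, neg_smul, mul_smul]
    by_cases hb : m = b
    · subst hb
      rw [swap_apply_right, Fin.swap_comp_succAbove_of_succ_eq' hab,
        removalSign_comp_swap_left deg hab, neg_smul, mul_smul]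
    obtain ⟨a', b', hab', rfl, rfl, hcomm⟩ := Fin.exists_swap_comp_succAbove hab ha hb
    rw [swap_apply_of_ne_of_ne ha hb, removalSign_comp_swap_of_ne deg hab ha hb, hcomm,
      ← Function.comp_assoc, ← Function.comp_assoc,
      h (deg ∘ m.succAbove) (v ∘ m.succAbove) (fun j => hv _) a' b' hab']
    simp only [Function.comp_apply, map_neg, map_smul, LinearMap.neg_apply, LinearMap.smul_apply,
      smul_neg, smul_comm (removalSign k deg m)]
  rw [muRec_add_three, muRec_add_three, ← Equiv.sum_comp (swap a b),
    sum_congr rfl fun m _ => key m, sum_neg_distrib, ← smul_sum, smul_neg, smul_comm]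

theorem isGradedAntisymm_muRec (D : GradedDGLA k V) (η : V →ₗ[k] V) :
    ∀ N, IsGradedAntisymm D.grade (muRec D.d D.bracket η N)
  | 0 => fun _ _ _ a => a.elim0
  | 1 => fun _ _ _ a b hab => by have := b.isLt; omega
  | 2 => isGradedAntisymm_muRec_two D η
  | n + 3 => isGradedAntisymm_muRec_add_three (isGradedAntisymm_muRec D η (n + 2))

end Antisymmetry

end

theorem statement14_general {k V : Type*} [Field k] [AddCommGroup V] [Module k V]
    (D : GradedDGLA k V) (η : V →ₗ[k] V)
    (hη : ∀ (i : ℤ) (v : V), v ∈ D.grade i → η v ∈ D.grade (i - 1)) :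
    ∀ (n : ℕ), 1 ≤ n → ∀ (deg : Fin n → ℤ) (v : Fin n → V),
      (∀ j, v j ∈ D.grade (deg j)) →
      (∀ a b : Fin n, (a : ℕ) + 1 = (b : ℕ) →
        muRec D.d D.bracket η n deg v
          = -((-1 : k) ^ (deg a * deg b) •
              muRec D.d D.bracket η n (deg ∘ Equiv.swap a b) (v ∘ Equiv.swap a b)))
      ∧ muRec D.d D.bracket η n deg v ∈ D.grade ((∑ j, deg j) + 2 - n) := by
  intro n _ deg v hv
  refine ⟨fun a b hab => ?_, muRec_mem_grade D η hη hv⟩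
  rw [isGradedAntisymm_muRec D η n deg v hv a b hab, smul_neg, neg_neg, smul_smul,
    neg_one_zpow_mul_self, one_smul]

theorem statement14 {k V : Type*} [Field k] [CharZero k] [AddCommGroup V] [Module k V]
    (D : GradedDGLA k V) (η : V →ₗ[k] V)
    (hη : ∀ (i : ℤ) (v : V), v ∈ D.grade i → η v ∈ D.grade (i - 1)) :
    ∀ (n : ℕ), 1 ≤ n → ∀ (deg : Fin n → ℤ) (v : Fin n → V),
      (∀ j, v j ∈ D.grade (deg j)) →
      (∀ a b : Fin n, (a : ℕ) + 1 = (b : ℕ) →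
        muRec D.d D.bracket η n deg v
          = -((-1 : k) ^ (deg a * deg b) •
              muRec D.d D.bracket η n (deg ∘ Equiv.swap a b) (v ∘ Equiv.swap a b)))
      ∧ muRec D.d D.bracket η n deg v ∈ D.grade ((∑ j, deg j) + 2 - n) :=
  statement14_general D η hη
end
end
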